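/- Let H(x) = x + 1 and let b, c ≥ 1 and x ≥ 2c be natural numbers, and set G = H^{ω^b·c} (Hardy hierarchy). Then for every a ≥ 1, H^{ω^{b+a}}((c+1)·x) ≥ (c+1)·G^{ω^a}(x). -/

import Mathlib

/-!
Write `F k = H^(ω^k)`. Everything in sight is built from `H` by iteration and by the
diagonalisation `g ↦ (x ↦ g^[x+1] x)`: `F (k+1)` is the diagonalisation of `F k`, `G = (F b)^[c]`,
and `G^(ω^a)` is the `a`-fold diagonalisation of `G`; the graph `HardyRel` is functional below
`ω^ω`, so it pins these functions down.

The relation `(c+1)(u+1) ≤ v+1` between an argument `u` on the `G`-side and an argument `v` on the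
`H`-side is preserved by `F k` for `k ≥ 1` (for `k = 1` because `F 1 x = 2x+1`), and passes
through iteration and diagonalisation as long as the `H`-side is iterated at least as often and is
inflationary. At the first level a diagonal step of `G` is `c(u+1)` steps of `F b`, against the
`v+1` steps of `F (b+1)`. Finally, since `x ≥ 2c`, the `H`-side has at least one spare step at
the top level, which at least doubles `(c+1)x` and so establishes the relation at the start.
-/

open Ordinal

/-- The graph of the Hardy hierarchy `h^α` for ordinals `α ≤ ω^ω`, defined with
the standard fundamental sequences `(ω^ω)(x) = ω^(x+1)` and
`(β + ω^(k+1))(x) = β + ω^k·(x+1)` (for `β + ω^(k+1)` in Cantor Normal Form,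
i.e. `ω^(k+1) ∣ β`).  `HardyRel h α x y` means `h^α(x) = y`. -/
inductive HardyRel (h : ℕ → ℕ) : Ordinal → ℕ → ℕ → Prop
  | zero (x : ℕ) : HardyRel h 0 x x
  | succ (α : Ordinal) (x y : ℕ) : HardyRel h α (h x) y → HardyRel h (α + 1) x y
  | top (x y : ℕ) : HardyRel h (omega0 ^ (x + 1 : ℕ)) x y →
      HardyRel h (omega0 ^ omega0) x y
  | limit (β : Ordinal) (k x y : ℕ) : omega0 ^ (k + 1) ∣ β →
      HardyRel h (β + omega0 ^ k * ((x + 1 : ℕ) : Ordinal)) x y →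
      HardyRel h (β + omega0 ^ (k + 1)) x y

open Function Order

def diagIter (g : ℕ → ℕ) (x : ℕ) : ℕ := g^[x + 1] x

def hardyOmegaPow (h : ℕ → ℕ) : ℕ → ℕ → ℕ
  | 0 => h
  | k + 1 => diagIter (hardyOmegaPow h k)

section OrdinalShapes

lemma omega0_pow_lt_omega0_opow_omega0 (k : ℕ) : (ω : Ordinal) ^ k < ω ^ ω := by
  rw [← opow_natCast]
  exact (opow_lt_opow_iff_right one_lt_omega0).2 (natCast_lt_omega0 k)

lemma isSuccLimit_omega0_opow_omega0 : IsSuccLimit ((ω : Ordinal) ^ ω) :=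
  isSuccLimit_opow one_lt_omega0 isSuccLimit_omega0

lemma isSuccLimit_add_omega0_pow_succ (β : Ordinal) (k : ℕ) : IsSuccLimit (β + ω ^ (k + 1)) := by
  refine isSuccLimit_add β ?_
  rw [pow_succ]
  exact isSuccLimit_mul_right (pow_pos omega0_pos k) isSuccLimit_omega0

lemma omega0_pow_succ_mul_add_one_inj {k k' : ℕ} {δ δ' : Ordinal} (hkk' : k ≤ k')
    (h : ω ^ (k + 1) * (δ + 1) = ω ^ (k' + 1) * (δ' + 1)) : k = k' ∧ δ = δ' := by
  obtain ⟨d, rfl⟩ := Nat.exists_eq_add_of_le hkk'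
  rw [show k + d + 1 = k + 1 + d by omega, pow_add _ (k + 1) d, mul_assoc] at h
  have h' := mul_left_cancel₀ (pow_pos omega0_pos _).ne' h
  cases d with
  | zero => simpa using h'
  | succ d =>
    have hdvd : ω ∣ δ + 1 := h' ▸ dvd_mul_of_dvd_left (dvd_pow_self _ d.succ_ne_zero) _
    rw [← isSuccPrelimit_iff_omega0_dvd, ← succ_eq_add_one] at hdvd
    exact absurd hdvd (not_isSuccPrelimit_succ δ)

lemma add_omega0_pow_succ_inj {β β' : Ordinal} {k k' : ℕ} (hβ : ω ^ (k + 1) ∣ β)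
    (hβ' : ω ^ (k' + 1) ∣ β') (h : β + ω ^ (k + 1) = β' + ω ^ (k' + 1)) : k = k' ∧ β = β' := by
  obtain ⟨δ, rfl⟩ := hβ
  obtain ⟨δ', rfl⟩ := hβ'
  rw [← mul_add_one, ← mul_add_one] at h
  obtain ⟨rfl, rfl⟩ : k = k' ∧ δ = δ' := by
    rcases le_total k k' with hkk' | hk'k
    · exact omega0_pow_succ_mul_add_one_inj hkk' h
    · exact (omega0_pow_succ_mul_add_one_inj hk'k h.symm).imp Eq.symm Eq.symm
  exact ⟨rfl, rfl⟩

lemma add_omega0_pow_succ_ne_omega0_opow_omega0 {β : Ordinal} {k : ℕ} (hβ : ω ^ (k + 1) ∣ β) :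
    β + ω ^ (k + 1) ≠ ω ^ ω := by
  obtain ⟨δ, rfl⟩ := hβ
  have hω : (ω : Ordinal) ^ ω = ω ^ (k + 1) * ω ^ ω := by
    rw [← opow_natCast, ← opow_add, natCast_add_omega0]
  rw [← mul_add_one, hω]
  intro h
  have h' := mul_left_cancel₀ (pow_pos omega0_pos _).ne' h
  rw [← succ_eq_add_one] at h'
  exact isSuccLimit_omega0_opow_omega0.succ_ne δ h'

end OrdinalShapes

namespace HardyRel

variable {h : ℕ → ℕ} {x y : ℕ}

theorem add_omega0_pow_mul {k : ℕ} {α : Ordinal} (hα : ω ^ k ∣ α) (m : ℕ)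
    (H : HardyRel h α ((hardyOmegaPow h k)^[m] x) y) : HardyRel h (α + ω ^ k * m) x y := by
  induction k generalizing α m x with
  | zero =>
    induction m generalizing x with
    | zero => simpa using H
    | succ m ih =>
      rw [Nat.cast_succ, mul_add_one, ← add_assoc, pow_zero, one_mul]
      exact succ _ _ _ (by simpa using ih (iterate_succ_apply _ _ _ ▸ H))
  | succ k ihk =>
    induction m generalizing x with
    | zero => simpa using H
    | succ m ihm =>
      rw [Nat.cast_succ, mul_add_one, ← add_assoc]
      have hk : ω ^ k ∣ ω ^ (k + 1) := pow_dvd_pow _ k.le_succ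
      refine limit _ k x y (dvd_add hα (dvd_mul_right _ _)) (ihk ?_ (x + 1) ?_)
      · exact dvd_add (hk.trans hα) (hk.trans (dvd_mul_right _ _))
      · exact ihm (iterate_succ_apply _ _ _ ▸ H)

theorem omega0_pow_mul (h : ℕ → ℕ) (k m x : ℕ) :
    HardyRel h (ω ^ k * m) x ((hardyOmegaPow h k)^[m] x) := by
  simpa using add_omega0_pow_mul (dvd_zero _) m (zero ((hardyOmegaPow h k)^[m] x))

theorem omega0_pow (h : ℕ → ℕ) (k x : ℕ) : HardyRel h (ω ^ k) x (hardyOmegaPow h k x) := by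
  simpa using omega0_pow_mul h k 1 x

theorem zero_iff : HardyRel h 0 x y ↔ y = x := by
  refine ⟨fun H => ?_, by rintro rfl; exact zero y⟩
  generalize hγ : (0 : Ordinal) = γ at H
  cases H with
  | zero => rfl
  | succ α _ _ _ => exact absurd hγ.symm (add_pos_of_right zero_lt_one α).ne'
  | top => exact absurd hγ.symm isSuccLimit_omega0_opow_omega0.ne_zero
  | limit β k _ _ _ _ => exact absurd hγ.symm (isSuccLimit_add_omega0_pow_succ β k).ne_zero

theorem add_one_iff {α : Ordinal} : HardyRel h (α + 1) x y ↔ HardyRel h α (h x) y := by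
  refine ⟨fun H => ?_, succ α x y⟩
  generalize hγ : α + 1 = γ at H
  cases H with
  | zero => exact absurd hγ (add_pos_of_right zero_lt_one α).ne'
  | succ α' _ _ H => rwa [add_one_inj.1 hγ]
  | top => exact absurd hγ (succ_eq_add_one α ▸ isSuccLimit_omega0_opow_omega0.succ_ne α)
  | limit β k _ _ _ _ =>
    exact absurd hγ (succ_eq_add_one α ▸ (isSuccLimit_add_omega0_pow_succ β k).succ_ne α)

theorem add_omega0_pow_succ_iff {β : Ordinal} {k : ℕ} (hβ : ω ^ (k + 1) ∣ β) :
    HardyRel h (β + ω ^ (k + 1)) x y ↔ HardyRel h (β + ω ^ k * ((x + 1 : ℕ) : Ordinal)) x y := by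
  refine ⟨fun H => ?_, limit β k x y hβ⟩
  generalize hγ : β + ω ^ (k + 1) = γ at H
  cases H with
  | zero => exact absurd hγ (isSuccLimit_add_omega0_pow_succ β k).ne_zero
  | succ α _ _ _ =>
    exact absurd hγ.symm (succ_eq_add_one α ▸ (isSuccLimit_add_omega0_pow_succ β k).succ_ne α)
  | top => exact absurd hγ (add_omega0_pow_succ_ne_omega0_opow_omega0 hβ)
  | limit β' k' _ _ hβ' H =>
    obtain ⟨rfl, rfl⟩ := add_omega0_pow_succ_inj hβ hβ' hγ
    exact H

theorem unique {α : Ordinal} {y' : ℕ} (H : HardyRel h α x y) (H' : HardyRel h α x y')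
    (hα : α < ω ^ ω) : y = y' := by
  induction H generalizing y' with
  | zero x => exact (zero_iff.1 H').symm
  | succ α x y _ ih => exact ih (add_one_iff.1 H') ((lt_add_one α).trans hα)
  | top => exact absurd hα (lt_irrefl _)
  | limit β k x y hβ _ ih =>
    refine ih ((add_omega0_pow_succ_iff hβ).1 H') (lt_trans ?_ hα)
    rw [add_lt_add_iff_left, pow_succ]
    exact (mul_lt_mul_iff_right₀ (pow_pos omega0_pos k)).2 (natCast_lt_omega0 _)

end HardyRel

section Domination

variable {g g₁ g₂ : ℕ → ℕ}

lemma id_le_diagIter (hg : id ≤ g) : id ≤ diagIter g :=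
  fun x => id_le_iterate_of_id_le hg (x + 1) x

lemma le_diagIter (hg : id ≤ g) (x : ℕ) : g x ≤ diagIter g x := by
  rw [diagIter, iterate_succ_apply]
  exact id_le_iterate_of_id_le hg x (g x)

lemma id_le_hardyOmegaPow {h : ℕ → ℕ} (hh : id ≤ h) : ∀ k, id ≤ hardyOmegaPow h k
  | 0 => hh
  | k + 1 => id_le_diagIter (id_le_hardyOmegaPow hh k)

lemma id_le_hardyOmegaPow_succ (k : ℕ) : id ≤ hardyOmegaPow (· + 1) k :=
  id_le_hardyOmegaPow (fun _ => Nat.le_succ _) k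

def ScaledMono (c : ℕ) (g₁ g₂ : ℕ → ℕ) : Prop :=
  ∀ ⦃u v : ℕ⦄, (c + 1) * (u + 1) ≤ v + 1 → (c + 1) * (g₁ u + 1) ≤ g₂ v + 1

variable {c : ℕ}

lemma ScaledMono.iterate (hg : ScaledMono c g₁ g₂) : ∀ n, ScaledMono c g₁^[n] g₂^[n]
  | 0 => fun _ _ huv => huv
  | n + 1 => fun u v huv => by
    rw [iterate_succ_apply, iterate_succ_apply]
    exact hg.iterate n (hg huv)

lemma ScaledMono.iterate_le (hg : ScaledMono c g₁ g₂) (hg₂ : id ≤ g₂) {m n u v : ℕ} (hmn : m ≤ n)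
    (huv : (c + 1) * (u + 1) ≤ v + 1) : (c + 1) * (g₁^[m] u + 1) ≤ g₂^[n] v + 1 := by
  obtain ⟨d, rfl⟩ := Nat.exists_eq_add_of_le hmn
  rw [iterate_add_apply]
  exact hg.iterate m (huv.trans (by simpa using id_le_iterate_of_id_le hg₂ d v))

lemma ScaledMono.iterate_self (hg : ScaledMono c g₁ g₂) (hg₂ : id ≤ g₂) {m n : ℕ → ℕ}
    (hmn : ∀ ⦃u v⦄, (c + 1) * (u + 1) ≤ v + 1 → m u ≤ n v) :
    ScaledMono c (fun u => g₁^[m u] u) (fun v => g₂^[n v] v) :=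
  fun _ _ huv => hg.iterate_le hg₂ (hmn huv) huv

lemma ScaledMono.diagIter (hg : ScaledMono c g₁ g₂) (hg₂ : id ≤ g₂) :
    ScaledMono c (diagIter g₁) (diagIter g₂) :=
  hg.iterate_self hg₂ fun u v huv => by nlinarith

lemma ScaledMono.mul_iterate_le (hg : ScaledMono c g₁ g₂) (hg₂ : id ≤ g₂) {m n x : ℕ}
    (hdouble : 2 * ((c + 1) * x) ≤ g₂ ((c + 1) * x)) (hx : 1 ≤ x) (hmn : m < n) :
    (c + 1) * g₁^[m] x ≤ g₂^[n] ((c + 1) * x) := by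
  obtain ⟨n, rfl⟩ := Nat.exists_eq_add_of_lt hmn
  have key := hg.iterate_le hg₂ (Nat.le_add_left m n) (u := x) (v := g₂ ((c + 1) * x))
    (by nlinarith)
  rw [← iterate_succ_apply, Nat.succ_eq_add_one, add_comm n m] at key
  nlinarith

end Domination

lemma hardyOmegaPow_one_succ (x : ℕ) : hardyOmegaPow (· + 1) 1 x = 2 * x + 1 := by
  simp only [hardyOmegaPow, diagIter, add_right_iterate, _root_.smul_eq_mul, mul_one]
  omega

lemma two_mul_le_hardyOmegaPow_succ {k : ℕ} (hk : 1 ≤ k) (x : ℕ) :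
    2 * x ≤ hardyOmegaPow (· + 1) k x := by
  induction k, hk using Nat.le_induction with
  | base => rw [hardyOmegaPow_one_succ]; omega
  | succ k _ ih => exact ih.trans (le_diagIter (id_le_hardyOmegaPow_succ k) x)

lemma scaledMono_hardyOmegaPow_succ (c : ℕ) {k : ℕ} (hk : 1 ≤ k) :
    ScaledMono c (hardyOmegaPow (· + 1) k) (hardyOmegaPow (· + 1) k) := by
  induction k, hk using Nat.le_induction with
  | base =>
    intro u v huv
    rw [hardyOmegaPow_one_succ, hardyOmegaPow_one_succ]
    nlinarith
  | succ k _ ih => exact ih.diagIter (id_le_hardyOmegaPow_succ k)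

lemma scaledMono_hardyOmegaPow_iterate {b : ℕ} (hb : 1 ≤ b) (c j : ℕ) :
    ScaledMono c (hardyOmegaPow (hardyOmegaPow (· + 1) b)^[c] (j + 1))
      (hardyOmegaPow (· + 1) (b + j + 1)) := by
  induction j with
  | zero =>
    have hdiag : diagIter (hardyOmegaPow (· + 1) b)^[c] =
        fun u => (hardyOmegaPow (· + 1) b)^[c * (u + 1)] u := by
      funext u
      rw [diagIter, ← iterate_mul]
    show ScaledMono c (diagIter (hardyOmegaPow _ b)^[c]) (diagIter _)
    rw [hdiag]
    exact (scaledMono_hardyOmegaPow_succ c hb).iterate_self (id_le_hardyOmegaPow_succ b)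
      fun u v huv => by nlinarith
  | succ j ih => exact ih.diagIter (id_le_hardyOmegaPow_succ _)

theorem mul_hardyOmegaPow_iterate_le {a b c x : ℕ} (hb : 1 ≤ b) (hc : 1 ≤ c) (hx : c ≤ x)
    (ha : 1 ≤ a) :
    (c + 1) * hardyOmegaPow (hardyOmegaPow (· + 1) b)^[c] a x ≤
      hardyOmegaPow (· + 1) (b + a) ((c + 1) * x) := by
  obtain ⟨j, rfl⟩ := Nat.exists_eq_add_of_le' ha
  have hinfl := id_le_hardyOmegaPow_succ (b + j)
  have hdouble := two_mul_le_hardyOmegaPow_succ (k := b + j) (by omega) ((c + 1) * x)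
  show (c + 1) * diagIter _ x ≤ diagIter _ ((c + 1) * x)
  cases j with
  | zero =>
    rw [diagIter, hardyOmegaPow, ← iterate_mul]
    exact (scaledMono_hardyOmegaPow_succ c hb).mul_iterate_le hinfl hdouble (by omega)
      (by nlinarith)
  | succ j =>
    exact (scaledMono_hardyOmegaPow_iterate hb c j).mul_iterate_le hinfl hdouble (by omega)
      (by nlinarith)

/-- With `H(x) = x + 1`, `b, c ≥ 1`, `x ≥ 2c` and `G = H^(ω^b·c)`, for every
`a ≥ 1` we have `H^(ω^(b+a))((c+1)·x) ≥ (c+1)·G^(ω^a)(x)`.  The function `G` is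
specified via its Hardy-hierarchy graph. -/
theorem stmt9 (b c : ℕ) (hb : 1 ≤ b) (hc : 1 ≤ c) (x : ℕ) (hx : 2 * c ≤ x)
    (G : ℕ → ℕ)
    (hG : ∀ u w, HardyRel (fun n => n + 1) (omega0 ^ b * (c : Ordinal)) u w ↔ G u = w)
    (a : ℕ) (ha : 1 ≤ a) :
    ∀ y z, HardyRel (fun n => n + 1) (omega0 ^ (b + a)) ((c + 1) * x) y →
      HardyRel G (omega0 ^ a) x z → (c + 1) * z ≤ y := by
  intro y z Hy Hz
  obtain rfl : G = (hardyOmegaPow (· + 1) b)^[c] :=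
    funext fun u => (hG u _).1 (HardyRel.omega0_pow_mul _ b c u)
  rw [Hy.unique (HardyRel.omega0_pow _ _ _) (omega0_pow_lt_omega0_opow_omega0 _),
    Hz.unique (HardyRel.omega0_pow _ _ _) (omega0_pow_lt_omega0_opow_omega0 _)]
  exact mul_hardyOmegaPow_iterate_le hb hc (by omega) ha
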